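/- arXiv:2004.01828 — 2 statements merged into one kernel-verified Lean document; each statement's English description precedes it below -/
import Mathlib

section
/- Let a ≤ b be reals and let g, c : ℝ → ℝ be differentiable on [a, b], with g'(l) ≥ 0 for all l ∈ [a, b] and the local incentive condition l·g'(l) − c'(l) = 0 for all l ∈ [a, b]. Then for all φ, φ' ∈ [a, b], the global incentive-compatibility inequality holds: φ·g(φ) − c(φ) ≥ φ·g(φ') − c(φ'). -/
/-!
Under the local condition `c' l = l * g' l`, the type-`φ` surplus `l ↦ φ * g l - c l` has
derivative `(φ - l) * g' l`. Since `g' ≥ 0`, this is nonnegative for `l < φ` and nonpositive for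
`l > φ`, so the surplus is single-peaked on `[a, b]` with its maximum at the truthful report `φ`.
-/

open Set

lemma monotoneOn_Icc_of_hasDerivAt_nonneg {f f' : ℝ → ℝ} {x y : ℝ}
    (hf : ∀ l ∈ Icc x y, HasDerivAt f (f' l) l) (hf' : ∀ l ∈ Ioo x y, 0 ≤ f' l) :
    MonotoneOn f (Icc x y) :=
  monotoneOn_of_hasDerivWithinAt_nonneg (convex_Icc x y)
    (fun l hl => (hf l hl).continuousAt.continuousWithinAt)
    (fun l hl => (hf l (interior_subset hl)).hasDerivWithinAt)
    (by rwa [interior_Icc])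

lemma antitoneOn_Icc_of_hasDerivAt_nonpos {f f' : ℝ → ℝ} {x y : ℝ}
    (hf : ∀ l ∈ Icc x y, HasDerivAt f (f' l) l) (hf' : ∀ l ∈ Ioo x y, f' l ≤ 0) :
    AntitoneOn f (Icc x y) :=
  antitoneOn_of_hasDerivWithinAt_nonpos (convex_Icc x y)
    (fun l hl => (hf l hl).continuousAt.continuousWithinAt)
    (fun l hl => (hf l (interior_subset hl)).hasDerivWithinAt)
    (by rwa [interior_Icc])

lemma isMaxOn_Icc_of_hasDerivAt_nonneg_nonpos {f f' : ℝ → ℝ} {a b φ : ℝ} (hφ : φ ∈ Icc a b)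
    (hf : ∀ l ∈ Icc a b, HasDerivAt f (f' l) l)
    (hleft : ∀ l ∈ Ioo a φ, 0 ≤ f' l) (hright : ∀ l ∈ Ioo φ b, f' l ≤ 0) :
    IsMaxOn f (Icc a b) φ := by
  intro x hx
  rcases le_total x φ with hxφ | hφx
  · have hmono : MonotoneOn f (Icc x φ) :=
      monotoneOn_Icc_of_hasDerivAt_nonneg
        (fun l hl => hf l (Icc_subset_Icc hx.1 hφ.2 hl))
        (fun l hl => hleft l (Ioo_subset_Ioo_left hx.1 hl))
    exact hmono (left_mem_Icc.2 hxφ) (right_mem_Icc.2 hxφ) hxφ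
  · have hanti : AntitoneOn f (Icc φ x) :=
      antitoneOn_Icc_of_hasDerivAt_nonpos
        (fun l hl => hf l (Icc_subset_Icc hφ.1 hx.2 hl))
        (fun l hl => hright l (Ioo_subset_Ioo_right hx.2 hl))
    exact hanti (left_mem_Icc.2 hφx) (right_mem_Icc.2 hφx) hφx

lemma hasDerivAt_surplus_of_local_ic {g c : ℝ → ℝ} {g' c' φ l : ℝ}
    (hg : HasDerivAt g g' l) (hc : HasDerivAt c c' l) (hloc : l * g' - c' = 0) :
    HasDerivAt (fun x => φ * g x - c x) ((φ - l) * g') l := by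
  have hc' : c' = l * g' := by linear_combination -hloc
  simpa only [hc', sub_mul] using (hg.const_mul φ).fun_sub hc

theorem stmt6_general (a b : ℝ) (g c g' c' : ℝ → ℝ)
    (hg : ∀ l ∈ Set.Icc a b, HasDerivAt g (g' l) l)
    (hc : ∀ l ∈ Set.Icc a b, HasDerivAt c (c' l) l)
    (hg' : ∀ l ∈ Set.Icc a b, 0 ≤ g' l)
    (hloc : ∀ l ∈ Set.Icc a b, l * g' l - c' l = 0) :
    ∀ φ ∈ Set.Icc a b, ∀ φ' ∈ Set.Icc a b,
      φ * g φ - c φ ≥ φ * g φ' - c φ' := by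
  intro φ hφ φ' hφ'
  have hleft : Ioo a φ ⊆ Icc a b := Ioo_subset_Icc_self.trans (Icc_subset_Icc_right hφ.2)
  have hright : Ioo φ b ⊆ Icc a b := Ioo_subset_Icc_self.trans (Icc_subset_Icc_left hφ.1)
  have hmax : IsMaxOn (fun x => φ * g x - c x) (Icc a b) φ :=
    isMaxOn_Icc_of_hasDerivAt_nonneg_nonpos hφ
      (fun l hl => hasDerivAt_surplus_of_local_ic (hg l hl) (hc l hl) (hloc l hl))
      (fun l hl => mul_nonneg (sub_nonneg.2 hl.2.le) (hg' l (hleft hl)))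
      (fun l hl => mul_nonpos_of_nonpos_of_nonneg (sub_nonpos.2 hl.1.le) (hg' l (hright hl)))
  exact hmax hφ'

theorem stmt6 (a b : ℝ) (hab : a ≤ b) (g c g' c' : ℝ → ℝ)
    (hg : ∀ l ∈ Set.Icc a b, HasDerivAt g (g' l) l)
    (hc : ∀ l ∈ Set.Icc a b, HasDerivAt c (c' l) l)
    (hg' : ∀ l ∈ Set.Icc a b, 0 ≤ g' l)
    (hloc : ∀ l ∈ Set.Icc a b, l * g' l - c' l = 0) :
    ∀ φ ∈ Set.Icc a b, ∀ φ' ∈ Set.Icc a b,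
      φ * g φ - c φ ≥ φ * g φ' - c φ' :=
  stmt6_general a b g c g' c' hg hc hg' hloc
end

section
/- Let a ≤ b and let g, c : ℝ → ℝ be differentiable on [a, b] with g'(l) ≥ 0 and l·g'(l) − c'(l) ≥ 0 for all l ∈ [a, b]. Then for all φ, φ' ∈ [a, b] with φ' ≤ φ: φ·g(φ) − c(φ) ≥ φ·g(φ') − c(φ'). That is, the local incentive condition together with monotonicity of the payment schedule implies all upward IC constraints. -/
theorem stmt7 (a b : ℝ) (hab : a ≤ b) (g c g' c' : ℝ → ℝ)
    (hg : ∀ l ∈ Set.Icc a b, HasDerivAt g (g' l) l)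
    (hc : ∀ l ∈ Set.Icc a b, HasDerivAt c (c' l) l)
    (hg' : ∀ l ∈ Set.Icc a b, 0 ≤ g' l)
    (hloc : ∀ l ∈ Set.Icc a b, 0 ≤ l * g' l - c' l) :
    ∀ φ ∈ Set.Icc a b, ∀ φ' ∈ Set.Icc a b, φ' ≤ φ →
      φ * g φ - c φ ≥ φ * g φ' - c φ' := by
  intro φ hφ φ' hφ' hle
  have hsub : Set.Icc φ' φ ⊆ Set.Icc a b :=
    Set.Icc_subset_Icc hφ'.1 hφ.2
  have hmono : MonotoneOn (fun l => φ * g l - c l) (Set.Icc φ' φ) := by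
    apply monotoneOn_of_deriv_nonneg (convex_Icc _ _)
    · apply ContinuousOn.sub (ContinuousOn.mul continuousOn_const ?_) ?_
      · exact fun l hl => ((hg l (hsub hl)).continuousAt).continuousWithinAt
      · exact fun l hl => ((hc l (hsub hl)).continuousAt).continuousWithinAt
    · intro l hl
      rw [interior_Icc] at hl
      have hlab : l ∈ Set.Icc a b := hsub (Set.Ioo_subset_Icc_self hl)
      exact DifferentiableAt.differentiableWithinAt
        (((hg l hlab).differentiableAt.const_mul φ).sub (hc l hlab).differentiableAt)
    · intro l hl
      rw [interior_Icc] at hl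
      have hlab : l ∈ Set.Icc a b := hsub (Set.Ioo_subset_Icc_self hl)
      have hd : HasDerivAt (fun l => φ * g l - c l) (φ * g' l - c' l) l :=
        ((hg l hlab).const_mul φ).sub (hc l hlab)
      rw [hd.deriv]
      have h1 := hloc l hlab
      have h2 : 0 ≤ (φ - l) * g' l :=
        mul_nonneg (by linarith [hl.2]) (hg' l hlab)
      nlinarith
  have := hmono (Set.left_mem_Icc.2 hle) (Set.right_mem_Icc.2 hle) hle
  simpa [ge_iff_le] using this
end
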